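/- arXiv:2405.16641 — 3 statements merged into one kernel-verified Lean document; each statement's English description precedes it below -/
import Mathlib

section
/- Let A_Γ be an even Artin group and let Ω be an induced subgraph of Γ. Then [A_Ω, A_Ω] = A_Ω ∩ [A_Γ, A_Γ], where A_Ω is the standard parabolic subgroup of A_Γ generated by the vertices of Ω. -/
/-- A labeled simplicial graph: a simple graph whose edges carry labels `≥ 2`. -/
structure LabeledGraph (V : Type) where
  Adj : V → V → Prop
  symm : ∀ {u v}, Adj u v → Adj v u
  loopless : ∀ v, ¬ Adj v v
  label : V → V → ℕ
  label_symm : ∀ u v, label u v = label v u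
  two_le_label : ∀ {u v}, Adj u v → 2 ≤ label u v

namespace LabeledGraph

variable {V : Type} (Γ : LabeledGraph V)

/-- The alternating word `uvuv⋯` of length `m` in the free group on the vertices. -/
def artinWord (u v : V) (m : ℕ) : FreeGroup V :=
  ((List.range m).map (fun i => FreeGroup.of (if i % 2 = 0 then u else v))).prod

/-- The Artin relations of a labeled graph. -/
def artinRels : Set (FreeGroup V) :=
  { r | ∃ u v, Γ.Adj u v ∧
      r = artinWord u v (Γ.label u v) * (artinWord v u (Γ.label u v))⁻¹ }

/-- The Artin group of a labeled graph. -/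
abbrev ArtinGroup := PresentedGroup Γ.artinRels

/-- The canonical generator of the Artin group corresponding to a vertex. -/
def gen (v : V) : Γ.ArtinGroup := PresentedGroup.of v

/-- The standard parabolic subgroup associated to a set of vertices. -/
def parabolic (S : Set V) : Subgroup Γ.ArtinGroup :=
  Subgroup.closure (Γ.gen '' S)

/-- An Artin group (graph) is even if all labels are even. -/
def IsEven : Prop := ∀ {u v}, Γ.Adj u v → Even (Γ.label u v)

/-- An even Artin group is of FC-type iff every triangle has at least two labels equal to 2. -/
def IsEvenFC : Prop := Γ.IsEven ∧
  ∀ {u v w}, Γ.Adj u v → Γ.Adj v w → Γ.Adj u w →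
    (Γ.label u v = 2 ∧ Γ.label v w = 2) ∨ (Γ.label u v = 2 ∧ Γ.label u w = 2) ∨
      (Γ.label v w = 2 ∧ Γ.label u w = 2)

/-- A parabolic subgroup: a conjugate of a standard parabolic subgroup. -/
def IsParabolic (P : Subgroup Γ.ArtinGroup) : Prop :=
  ∃ (g : Γ.ArtinGroup) (S : Set V),
    P = (Γ.parabolic S).map (MulAut.conj g).toMonoidHom

end LabeledGraph

/-- A group is finitely presented if it is isomorphic to the quotient of a
finitely generated free group by finitely many relations. -/
def IsFinitelyPresentedGroup (G : Type*) [Group G] : Prop :=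
  ∃ (n : ℕ) (rels : Set (FreeGroup (Fin n))), rels.Finite ∧
    Nonempty (PresentedGroup rels ≃* G)

/-- A group is coherent if every finitely generated subgroup is finitely presented. -/
def IsCoherentGroup (G : Type*) [Group G] : Prop :=
  ∀ H : Subgroup G, H.FG → IsFinitelyPresentedGroup H


open scoped Classical

section Alt
variable {G : Type*} [Group G]

/-- alternating word in a group -/
private def altWord (a b : G) (m : ℕ) : G :=
  ((List.range m).map (fun i => if i % 2 = 0 then a else b)).prod

private lemma altWord_two_mul (a b : G) (k : ℕ) : altWord a b (2 * k) = (a * b) ^ k := by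
  induction k with
  | zero => simp [altWord]
  | succ n ih =>
    have h2 : 2 * (n + 1) = (2 * n + 1) + 1 := by ring
    rw [altWord, h2, List.range_succ, List.range_succ]
    simp only [List.map_append, List.prod_append]
    have e1 : (2 * n) % 2 = 0 := by omega
    have e2 : (2 * n + 1) % 2 = 1 := by omega
    simp only [e1, e2, List.map_cons, List.map_nil, List.prod_cons, List.prod_nil]
    rw [if_pos trivial, if_neg one_ne_zero, mul_one, mul_one]
    show altWord a b (2 * n) * a * b = _
    rw [ih, pow_succ, mul_assoc]

private lemma map_artinWord {V : Type} (φ : FreeGroup V →* G) (u v : V) (m : ℕ) :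
    φ (LabeledGraph.artinWord u v m) = altWord (φ (FreeGroup.of u)) (φ (FreeGroup.of v)) m := by
  unfold LabeledGraph.artinWord altWord
  rw [map_list_prod, List.map_map]
  congr 1
  apply List.map_congr_left
  intro i _
  by_cases h : i % 2 = 0 <;> simp [h]

end Alt

namespace LabeledGraph

variable {V : Type} (Γ : LabeledGraph V)

private lemma gen_rel {u v : V} (h : Γ.Adj u v) :
    altWord (Γ.gen u) (Γ.gen v) (Γ.label u v) = altWord (Γ.gen v) (Γ.gen u) (Γ.label u v) := by
  have hmem : artinWord u v (Γ.label u v) * (artinWord v u (Γ.label u v))⁻¹ ∈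
      Subgroup.normalClosure Γ.artinRels :=
    Subgroup.subset_normalClosure ⟨u, v, h, rfl⟩
  have h1 : PresentedGroup.mk Γ.artinRels
      (artinWord u v (Γ.label u v) * (artinWord v u (Γ.label u v))⁻¹) = 1 :=
    (QuotientGroup.eq_one_iff _).mpr hmem
  rw [map_mul, map_inv, mul_inv_eq_one] at h1
  have h2 := map_artinWord (PresentedGroup.mk Γ.artinRels) u v (Γ.label u v)
  have h3 := map_artinWord (PresentedGroup.mk Γ.artinRels) v u (Γ.label u v)
  rw [h2, h3] at h1
  exact h1

private lemma lift_rels (heven : Γ.IsEven) (Ω : Set V) :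
    ∀ r ∈ Γ.artinRels, FreeGroup.lift
      (fun v => if v ∈ Ω then Γ.gen v else (1 : Γ.ArtinGroup)) r = 1 := by
  classical
  rintro r ⟨u, v, hAdj, rfl⟩
  set f : V → Γ.ArtinGroup := fun v => if v ∈ Ω then Γ.gen v else 1 with hf
  obtain ⟨k, hk⟩ := heven hAdj
  have hk' : Γ.label u v = 2 * k := by omega
  rw [map_mul, map_inv, mul_inv_eq_one,
    map_artinWord (FreeGroup.lift f) u v, map_artinWord (FreeGroup.lift f) v u]
  simp only [FreeGroup.lift_apply_of, hk', altWord_two_mul]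
  by_cases hu : u ∈ Ω
  · by_cases hv : v ∈ Ω
    · have := Γ.gen_rel hAdj
      rw [hk', altWord_two_mul, altWord_two_mul] at this
      simp only [hf, if_pos hu, if_pos hv]
      exact this
    · simp [hf, hv]
  · simp [hf, hu]

/-- The retraction of the even Artin group onto a standard parabolic. -/
private noncomputable def retr (heven : Γ.IsEven) (Ω : Set V) :
    Γ.ArtinGroup →* Γ.ArtinGroup :=
  PresentedGroup.toGroup (Γ.lift_rels heven Ω)

private lemma retr_gen (heven : Γ.IsEven) (Ω : Set V) (v : V) :
    Γ.retr heven Ω (Γ.gen v) = if v ∈ Ω then Γ.gen v else 1 :=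
  PresentedGroup.toGroup.of _

private lemma retr_fix (heven : Γ.IsEven) (Ω : Set V) {x : Γ.ArtinGroup}
    (hx : x ∈ Γ.parabolic Ω) : Γ.retr heven Ω x = x := by
  have : Γ.parabolic Ω ≤ (Γ.retr heven Ω).eqLocus (MonoidHom.id _) := by
    apply Subgroup.closure_le _ |>.mpr
    rintro _ ⟨v, hv, rfl⟩
    show Γ.retr heven Ω (Γ.gen v) = Γ.gen v
    rw [retr_gen, if_pos hv]
  exact this hx

private lemma retr_range (heven : Γ.IsEven) (Ω : Set V) :
    (Γ.retr heven Ω).range ≤ Γ.parabolic Ω := by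
  rw [MonoidHom.range_eq_map, ← PresentedGroup.closure_range_of Γ.artinRels,
    MonoidHom.map_closure]
  apply Subgroup.closure_le _ |>.mpr
  rintro _ ⟨_, ⟨v, rfl⟩, rfl⟩
  show Γ.retr heven Ω (Γ.gen v) ∈ Γ.parabolic Ω
  rw [retr_gen]
  by_cases hv : v ∈ Ω
  · rw [if_pos hv]; exact Subgroup.subset_closure ⟨v, hv, rfl⟩
  · rw [if_neg hv]; exact one_mem _

end LabeledGraph

/-- In an even Artin group, the derived subgroup of a standard
parabolic subgroup is the intersection of the parabolic subgroup with the derived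
subgroup of the whole group. -/
theorem even_artin_parabolic_commutator
    {V : Type} [Finite V] (Γ : LabeledGraph V) (heven : Γ.IsEven) (Ω : Set V) :
    ⁅Γ.parabolic Ω, Γ.parabolic Ω⁆ = Γ.parabolic Ω ⊓ commutator Γ.ArtinGroup := by
  apply le_antisymm
  · apply le_inf
    · rw [Subgroup.commutator_le]
      intro g hg h hh
      exact mul_mem (mul_mem (mul_mem hg hh) (inv_mem hg)) (inv_mem hh)
    · rw [commutator_def]
      exact Subgroup.commutator_mono le_top le_top
  · rintro x ⟨hx1, hx2⟩
    have hfix := Γ.retr_fix heven Ω hx1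
    have hmem : Γ.retr heven Ω x ∈ (commutator Γ.ArtinGroup).map (Γ.retr heven Ω) :=
      Subgroup.mem_map_of_mem _ hx2
    rw [hfix] at hmem
    have : (commutator Γ.ArtinGroup).map (Γ.retr heven Ω) ≤
        ⁅Γ.parabolic Ω, Γ.parabolic Ω⁆ := by
      rw [commutator_def, Subgroup.map_commutator]
      exact Subgroup.commutator_mono
        (by rw [← MonoidHom.range_eq_map]; exact Γ.retr_range heven Ω)
        (by rw [← MonoidHom.range_eq_map]; exact Γ.retr_range heven Ω)
    exact this hmem
end

section
/- Let G = A_Γ be an even Artin group of FC-type and let a be a vertex of Γ. Then the centralizer C_G(a) of a in G is contained in the standard parabolic subgroup A_{st_Γ(a)}, where st_Γ(a) is the induced subgraph on a together with all vertices adjacent to a. -/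
open Function

namespace Monoid

theorem CoprodI.NeWord.toList_inv {ι : Type*} {G : ι → Type*} [∀ i, Group (G i)] {i j : ι}
    (w : NeWord G i j) :
    w.inv.toList = (w.toList.map fun l => ⟨l.1, l.2⁻¹⟩).reverse := by
  induction w with
  | singleton => rfl
  | append w₁ _ w₂ ih₁ ih₂ => simp [NeWord.inv, ih₁, ih₂]

namespace PushoutI

open CoprodI

variable {ι : Type*} {G : ι → Type*} [∀ i, Group (G i)] {H : Type*} [Group H]
  {φ : ∀ i, H →* G i}

theorem NormalWord.reduced {d : NormalWord.Transversal φ} (w : NormalWord d) :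
    Reduced φ w.toWord := by
  intro l hl hrange
  apply w.ne_one l hl
  rw [← ((d.compl l.1).equiv_snd_eq_self_iff_mem (one_mem _)).2 (w.normalized l.1 l.2 hl)]
  exact ((d.compl l.1).coe_equiv_snd_eq_one_iff_mem (d.one_mem _)).2 hrange

theorem Reduced.length_eq_of_prod_eq (hφ : ∀ i, Injective (φ i)) {w₁ w₂ : Word G}
    (h₁ : Reduced φ w₁) (h₂ : Reduced φ w₂)
    (heq : ofCoprodI (φ := φ) w₁.prod = ofCoprodI w₂.prod) :
    w₁.toList.length = w₂.toList.length := by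
  classical
  obtain ⟨d⟩ := NormalWord.transversal_nonempty φ hφ
  obtain ⟨w₁', hp₁, hm₁⟩ := h₁.exists_normalWord_prod_eq d
  obtain ⟨w₂', hp₂, hm₂⟩ := h₂.exists_normalWord_prod_eq d
  have : w₁' = w₂' := NormalWord.prod_injective (by rw [hp₁, hp₂, heq])
  simpa [this, hm₂] using (congrArg List.length hm₁).symm

/-- Conjugating a letter `c ∉ φ i` by a nonempty reduced word not starting in `G i` gives a
reduced word of length at least three, so it cannot be a single letter. -/
theorem Reduced.eq_empty_of_conj_eq_of (hφ : ∀ i, Injective (φ i)) {i : ι} {w : Word G}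
    (hw : Reduced φ w) (hfst : w.fstIdx ≠ some i) {c c' : G i} (hc : c ∉ (φ i).range)
    (hc' : c' ∉ (φ i).range)
    (h : ofCoprodI (φ := φ) (w.prod⁻¹ * CoprodI.of c * w.prod) = of i c') :
    w = Word.empty := by
  by_contra hne
  obtain ⟨k, j, w, rfl⟩ := NeWord.of_word w hne
  have hki : k ≠ i := by
    intro hki
    apply hfst
    simp [Word.fstIdx, NeWord.toWord, hki]
  have hc1 : c ≠ 1 := by rintro rfl; exact hc (one_mem _)
  have hc'1 : c' ≠ 1 := by rintro rfl; exact hc' (one_mem _)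
  let W := (w.inv.append hki (.singleton c hc1)).append hki.symm w
  have hW : Reduced φ W.toWord := by
    intro l hl
    simp only [W, NeWord.toWord, NeWord.toList, NeWord.toList_inv, List.mem_append,
      List.mem_reverse, List.mem_map, List.mem_singleton] at hl
    rcases hl with (⟨l, hl, rfl⟩ | rfl) | hl
    · exact fun hmem => hw l hl (by simpa using inv_mem hmem)
    · exact hc
    · exact hw l hl
  have hletter : Reduced φ (NeWord.singleton c' hc'1).toWord := by
    simpa [Reduced, NeWord.toWord] using hc'
  have hprod : W.prod = w.prod⁻¹ * CoprodI.of c * w.prod := by simp [W, mul_assoc]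
  have hlen := hW.length_eq_of_prod_eq hφ hletter (by
    change ofCoprodI W.prod = ofCoprodI (NeWord.singleton c' hc'1).prod
    rw [hprod, NeWord.prod_singleton, ofCoprodI_of]
    exact h)
  simp [W, NeWord.toWord, NeWord.toList_inv] at hlen
  exact NeWord.toList_ne_nil w (List.length_eq_zero_iff.1 (by omega))

theorem Reduced.mem_range_of_conj_eq_of (hφ : ∀ i, Injective (φ i)) {i : ι} {w : Word G}
    (hw : Reduced φ w) {c x : G i} (hc : ∀ y : G i, y * c * y⁻¹ ∉ (φ i).range)
    (hx : x ∉ (φ i).range)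
    (h : ofCoprodI (φ := φ) (w.prod⁻¹ * CoprodI.of c * w.prod) = of i x) :
    ofCoprodI (φ := φ) w.prod ∈ (of i).range := by
  classical
  induction w using Word.consRecOn with
  | empty => simp
  | cons j m w hfst hm1 _ =>
    have hw' : Reduced φ w := fun l hl => hw l (List.mem_cons_of_mem _ hl)
    by_cases hji : j = i
    · subst hji
      obtain rfl : w = .empty := hw'.eq_empty_of_conj_eq_of hφ hfst (hc m⁻¹) hx (by
        simpa [mul_assoc] using h)
      exact ⟨m, by simp⟩
    · rw [hw.eq_empty_of_conj_eq_of hφ (by simpa using hji) (by simpa using hc 1) hx h]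
      simp

theorem centralizer_of_le_range_of (hφ : ∀ i, Injective (φ i)) {i : ι} {x : G i}
    (hx : ∀ y : G i, y * x * y⁻¹ ∉ (φ i).range) :
    Subgroup.centralizer {of (φ := φ) i x} ≤ (of i).range := by
  classical
  intro g hg
  obtain ⟨d⟩ := NormalWord.transversal_nonempty φ hφ
  set w : NormalWord d := g⁻¹ • .empty
  set y := φ i w.head
  have hg' : g⁻¹ = of i y * ofCoprodI w.toWord.prod := by
    have := NormalWord.prod_smul g⁻¹ (NormalWord.empty (d := d))
    rw [NormalWord.prod_empty, mul_one] at this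
    rw [of_apply_eq_base, ← this]
    rfl
  have hcomm : (g⁻¹)⁻¹ * of i x * g⁻¹ = of i x := by
    rw [inv_inv, Subgroup.mem_centralizer_singleton_iff.1 hg, mul_inv_cancel_right]
  have hconj : ofCoprodI (φ := φ)
      (w.toWord.prod⁻¹ * CoprodI.of (y⁻¹ * x * y) * w.toWord.prod) = of i x := by
    rw [hg'] at hcomm
    simpa [mul_assoc] using hcomm
  have hP := w.reduced.mem_range_of_conj_eq_of hφ
    (fun z => by simpa [mul_assoc] using hx (z * y⁻¹)) (by simpa using hx 1) hconj
  have : g⁻¹ ∈ (of i).range := hg' ▸ mul_mem ⟨y, rfl⟩ hP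
  simpa using inv_mem this

end PushoutI

end Monoid

open Monoid

namespace LabeledGraph

variable {V : Type} (Γ : LabeledGraph V)

/-- For an even label `2k`, the Artin relation of an edge `{u, v}` reads `(uv)^k = (vu)^k`. -/
def SatisfiesRels {K : Type*} [Group K] (f : V → K) : Prop :=
  ∀ ⦃u v⦄, Γ.Adj u v → (f u * f v) ^ (Γ.label u v / 2) = (f v * f u) ^ (Γ.label u v / 2)

theorem artinWord_two_mul (u v : V) (k : ℕ) :
    artinWord u v (2 * k) = (FreeGroup.of u * FreeGroup.of v) ^ k := by
  induction k with
  | zero => simp [artinWord]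
  | succ k ih =>
    have h0 : (2 * k) % 2 = 0 := by omega
    have h1 : (2 * k + 1) % 2 = 1 := by omega
    simp only [artinWord] at ih ⊢
    rw [show 2 * (k + 1) = 2 * k + 1 + 1 by ring, List.range_succ, List.range_succ]
    simp [ih, h0, h1, pow_succ]

variable {Γ}

theorem IsEven.artinRel_eq (hE : Γ.IsEven) {u v : V} (huv : Γ.Adj u v) :
    artinWord u v (Γ.label u v) * (artinWord v u (Γ.label u v))⁻¹ =
      (FreeGroup.of u * FreeGroup.of v) ^ (Γ.label u v / 2) *
        ((FreeGroup.of v * FreeGroup.of u) ^ (Γ.label u v / 2))⁻¹ := by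
  obtain ⟨k, hk⟩ := hE huv
  rw [hk, ← two_mul, artinWord_two_mul, artinWord_two_mul, Nat.mul_div_cancel_left _ two_pos]

theorem SatisfiesRels.lift_eq_one (hE : Γ.IsEven) {K : Type*} [Group K] {f : V → K}
    (hf : Γ.SatisfiesRels f) : ∀ r ∈ Γ.artinRels, FreeGroup.lift f r = 1 := by
  rintro r ⟨u, v, huv, rfl⟩
  simp [hE.artinRel_eq huv, hf huv]

theorem satisfiesRels_of (hE : Γ.IsEven) {rels : Set (FreeGroup V)} (h : Γ.artinRels ⊆ rels) :
    Γ.SatisfiesRels (PresentedGroup.of : V → PresentedGroup rels) := by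
  intro u v huv
  have := PresentedGroup.one_of_mem (h ⟨u, v, huv, rfl⟩)
  rwa [hE.artinRel_eq huv, map_mul, map_inv, mul_inv_eq_one, map_pow, map_pow, map_mul,
    map_mul] at this

theorem SatisfiesRels.comp {K K' : Type*} [Group K] [Group K'] {f : V → K}
    (hf : Γ.SatisfiesRels f) (ψ : K →* K') : Γ.SatisfiesRels (ψ ∘ f) := by
  intro u v huv
  simp only [comp_apply, ← map_mul, ← map_pow, hf huv]

open Classical in
theorem SatisfiesRels.indicator {K : Type*} [Group K] {f : V → K} (hf : Γ.SatisfiesRels f)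
    (S : Set V) : Γ.SatisfiesRels (fun v => if v ∈ S then f v else 1) := by
  intro u v huv
  by_cases hu : u ∈ S <;> by_cases hv : v ∈ S <;> simp [hu, hv, hf huv]

theorem satisfiesRels_of_commGroup {K : Type*} [CommGroup K] (f : V → K) :
    Γ.SatisfiesRels f :=
  fun u v _ => by rw [mul_comm]

variable (Γ) in
def killRels (S : Set V) : Set (FreeGroup V) :=
  Γ.artinRels ∪ FreeGroup.of '' Sᶜ

variable (Γ) in
/-- `A_Γ` with the generators outside `S` killed; for even `Γ` it is a copy of `A_S`. -/
abbrev Retract (S : Set V) := PresentedGroup (Γ.killRels S)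

namespace Retract

open PresentedGroup

theorem of_eq_one {S : Set V} {v : V} (hv : v ∉ S) : (of v : Γ.Retract S) = 1 :=
  one_of_mem (Or.inr ⟨v, hv, rfl⟩)

-- Evenness enters as an instance so that the homomorphisms below carry no proof argument.
variable [hE : Fact Γ.IsEven]

variable (Γ) in
theorem satisfiesRels_of (S : Set V) : Γ.SatisfiesRels (of : V → Γ.Retract S) :=
  LabeledGraph.satisfiesRels_of hE.out Set.subset_union_left

def lift {K : Type*} [Group K] {S : Set V} (f : V → K) (hf : Γ.SatisfiesRels f)
    (hS : ∀ v ∉ S, f v = 1) : Γ.Retract S →* K :=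
  toGroup (f := f) <| by
    rintro r (hr | ⟨v, hv, rfl⟩)
    · exact hf.lift_eq_one hE.out r hr
    · simpa using hS v hv

@[simp]
theorem lift_of {K : Type*} [Group K] {S : Set V} (f : V → K) (hf : Γ.SatisfiesRels f)
    (hS : ∀ v ∉ S, f v = 1) (v : V) : lift f hf hS (of v) = f v :=
  toGroup.of _

variable (Γ) in
open Classical in
noncomputable def map (S S' : Set V) : Γ.Retract S →* Γ.Retract S' :=
  lift (fun v => if v ∈ S then of v else 1) ((satisfiesRels_of Γ S').indicator S)
    fun _ hv => if_neg hv

theorem map_of {S S' : Set V} {v : V} (hv : v ∈ S) : map Γ S S' (of v) = of v := by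
  simp [map, hv]

theorem map_map {S S' S'' : Set V} (h : S ⊆ S') (q : Γ.Retract S) :
    map Γ S' S'' (map Γ S S' q) = map Γ S S'' q := by
  change (map Γ S' S'').comp (map Γ S S') q = _
  congr 1
  refine PresentedGroup.ext fun v => ?_
  by_cases hv : v ∈ S
  · simp [map_of hv, map_of (h hv)]
  · simp [of_eq_one hv]

theorem map_self {S : Set V} (q : Γ.Retract S) : map Γ S S q = q := by
  change _ = MonoidHom.id _ q
  congr 1
  refine PresentedGroup.ext fun v => ?_
  by_cases hv : v ∈ S
  · simp [map_of hv]
  · simp [of_eq_one hv]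

theorem map_injective {T S : Set V} (h : T ⊆ S) : Injective (map Γ T S) :=
  LeftInverse.injective (g := map Γ S T) fun q => by rw [map_map h, map_self]

/-- The exponent sum of `a` separates the conjugates of `a` from `A_T`. -/
theorem conj_of_notMem_range_map {T S : Set V} {a : V} (ha : a ∈ S) (haT : a ∉ T)
    (y : Γ.Retract S) : y * of a * y⁻¹ ∉ (map Γ T S).range := by
  classical
  let e : Γ.Retract S →* Multiplicative ℤ :=
    lift (fun v => if v = a then .ofAdd 1 else 1) (satisfiesRels_of_commGroup _)
      fun v hv => if_neg fun (hva : v = a) => hv (hva ▸ ha)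
  have he : e.comp (map Γ T S) = 1 := PresentedGroup.ext fun v => by
    by_cases hv : v ∈ T
    · simp [e, map_of hv, show v ≠ a from fun hva => haT (hva ▸ hv)]
    · simp [of_eq_one hv]
  rintro ⟨q, hq⟩
  have : e (y * of a * y⁻¹) = 1 := by
    rw [← hq, ← MonoidHom.comp_apply, he, MonoidHom.one_apply]
  simp [e] at this

variable (Γ) in
open Classical in
noncomputable def toArtin (S : Set V) : Γ.Retract S →* Γ.ArtinGroup :=
  lift (fun v => if v ∈ S then Γ.gen v else 1)
    ((LabeledGraph.satisfiesRels_of hE.out subset_rfl).indicator S) fun _ hv => if_neg hv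

theorem toArtin_of {S : Set V} {v : V} (hv : v ∈ S) : toArtin Γ S (of v) = Γ.gen v :=
  (lift_of _ _ _ v).trans (if_pos hv)

theorem toArtin_map {T S : Set V} (h : T ⊆ S) (q : Γ.Retract T) :
    toArtin Γ S (map Γ T S q) = toArtin Γ T q := by
  change (toArtin Γ S).comp (map Γ T S) q = _
  congr 1
  refine PresentedGroup.ext fun v => ?_
  by_cases hv : v ∈ T
  · simp [map_of hv, toArtin_of hv, toArtin_of (h hv)]
  · simp [of_eq_one hv]

theorem toArtin_mem_parabolic {S : Set V} (q : Γ.Retract S) :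
    toArtin Γ S q ∈ Γ.parabolic S := by
  refine generated_by _ ((Γ.parabolic S).comap (toArtin Γ S)) (fun v => ?_) q
  by_cases hv : v ∈ S
  · rw [Subgroup.mem_comap, toArtin_of hv]
    exact Subgroup.subset_closure (Set.mem_image_of_mem _ hv)
  · simp [of_eq_one hv]

end Retract

variable {ι : Type*}

variable (Γ) in
structure IsAmalgamCover (S : ι → Set V) (T : Set V) : Prop where
  subset : ∀ i, T ⊆ S i
  inter_subset : ∀ i j, i ≠ j → S i ∩ S j ⊆ T
  cover : ∀ v, ∃ i, v ∈ S i
  edge : ∀ ⦃u v⦄, Γ.Adj u v → ∃ i, u ∈ S i ∧ v ∈ S i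

variable (Γ) in
abbrev Amalgam [Fact Γ.IsEven] (S : ι → Set V) (T : Set V) :=
  PushoutI fun i => Retract.map Γ T (S i)

namespace IsAmalgamCover

open PresentedGroup

variable [hE : Fact Γ.IsEven] {S : ι → Set V} {T : Set V}

theorem of_of_eq (hST : Γ.IsAmalgamCover S T) {v : V} {i j : ι} (hi : v ∈ S i)
    (hj : v ∈ S j) :
    (PushoutI.of i (of v) : Γ.Amalgam S T) = PushoutI.of j (of v) := by
  obtain rfl | hij := eq_or_ne i j
  · rfl
  have hv : v ∈ T := hST.inter_subset i j hij ⟨hi, hj⟩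
  rw [← Retract.map_of (S' := S i) hv, ← Retract.map_of (S' := S j) hv,
    PushoutI.of_apply_eq_base, PushoutI.of_apply_eq_base]

noncomputable def toAmalgam (hST : Γ.IsAmalgamCover S T) : Γ.ArtinGroup →* Γ.Amalgam S T :=
  toGroup <| SatisfiesRels.lift_eq_one hE.out
    (f := fun v => PushoutI.of (hST.cover v).choose (of v)) fun u v huv => by
      obtain ⟨k, hu, hv⟩ := hST.edge huv
      simp only [hST.of_of_eq (hST.cover u).choose_spec hu,
        hST.of_of_eq (hST.cover v).choose_spec hv]
      exact (Retract.satisfiesRels_of Γ (S k)).comp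
        (PushoutI.of (φ := fun i => Retract.map Γ T (S i)) k) huv

theorem toAmalgam_gen (hST : Γ.IsAmalgamCover S T) {v : V} {i : ι} (hv : v ∈ S i) :
    hST.toAmalgam (Γ.gen v) = PushoutI.of i (of v) :=
  (toGroup.of _).trans (hST.of_of_eq (hST.cover v).choose_spec hv)

noncomputable def fromAmalgam (hST : Γ.IsAmalgamCover S T) : Γ.Amalgam S T →* Γ.ArtinGroup :=
  PushoutI.lift (fun i => Retract.toArtin Γ (S i)) (Retract.toArtin Γ T)
    fun i => MonoidHom.ext (Retract.toArtin_map (hST.subset i))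

theorem fromAmalgam_of (hST : Γ.IsAmalgamCover S T) {i : ι} (q : Γ.Retract (S i)) :
    hST.fromAmalgam (PushoutI.of i q) = Retract.toArtin Γ (S i) q :=
  PushoutI.lift_of (fun i => Retract.toArtin Γ (S i)) _ _ q

theorem fromAmalgam_toAmalgam (hST : Γ.IsAmalgamCover S T) (g : Γ.ArtinGroup) :
    hST.fromAmalgam (hST.toAmalgam g) = g := by
  change (hST.fromAmalgam.comp hST.toAmalgam) g = MonoidHom.id _ g
  congr 1
  refine PresentedGroup.ext fun v => ?_
  obtain ⟨i, hv⟩ := hST.cover v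
  exact (congrArg _ (hST.toAmalgam_gen hv)).trans
    ((hST.fromAmalgam_of _).trans (Retract.toArtin_of hv))

theorem centralizer_gen_le_parabolic (hST : Γ.IsAmalgamCover S T) {a : V} {i : ι}
    (ha : a ∈ S i) (haT : a ∉ T) :
    Subgroup.centralizer {Γ.gen a} ≤ Γ.parabolic (S i) := by
  intro g hg
  have hcent : hST.toAmalgam g ∈ Subgroup.centralizer {PushoutI.of i (of a)} := by
    rw [← hST.toAmalgam_gen ha, ← Set.image_singleton]
    exact Subgroup.map_centralizer_le_centralizer_image _ _ ⟨g, hg, rfl⟩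
  obtain ⟨q, hq⟩ := PushoutI.centralizer_of_le_range_of
    (fun j => Retract.map_injective (hST.subset j))
    (Retract.conj_of_notMem_range_map ha haT) hcent
  rw [← hST.fromAmalgam_toAmalgam g, ← hq, fromAmalgam_of]
  exact Retract.toArtin_mem_parabolic q

end IsAmalgamCover

variable (Γ) in
theorem isAmalgamCover_star (a : V) :
    Γ.IsAmalgamCover (fun b => cond b {a}ᶜ (insert a {v | Γ.Adj a v})) {v | Γ.Adj a v} := by
  refine ⟨?_, ?_, fun v => ?_, fun u v huv => ?_⟩
  · rintro (_ | _) v hv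
    · exact Or.inr hv
    · rintro rfl
      exact Γ.loopless _ hv
  · rintro (_ | _) (_ | _) hij v ⟨hi, hj⟩ <;> simp_all
  · by_cases hv : v = a
    · exact ⟨false, Or.inl hv⟩
    · exact ⟨true, hv⟩
  · by_cases hu : u = a
    · subst hu
      exact ⟨false, Or.inl rfl, Or.inr huv⟩
    by_cases hv : v = a
    · subst hv
      exact ⟨false, Or.inr (Γ.symm huv), Or.inl rfl⟩
    exact ⟨true, hu, hv⟩

end LabeledGraph

theorem centralizer_le_star_parabolic_general
    {V : Type} (Γ : LabeledGraph V) (hFC : Γ.IsEvenFC) (a : V) :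
    Subgroup.centralizer {Γ.gen a} ≤ Γ.parabolic (insert a {v | Γ.Adj a v}) :=
  have : Fact Γ.IsEven := ⟨hFC.1⟩
  (Γ.isAmalgamCover_star a).centralizer_gen_le_parabolic (i := false)
    (Set.mem_insert a _) (Γ.loopless a)

/-- In an even Artin group of FC-type, the centralizer of a standard
generator `a` is contained in the standard parabolic subgroup on the star of `a`. -/
theorem centralizer_le_star_parabolic
    {V : Type} [Finite V] (Γ : LabeledGraph V) (hFC : Γ.IsEvenFC) (a : V) :
    Subgroup.centralizer {Γ.gen a} ≤ Γ.parabolic (insert a {v | Γ.Adj a v}) :=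
  centralizer_le_star_parabolic_general Γ hFC a
end

section
/- Let A_Γ be an even Artin group, let x and y be vertices of Γ (viewed as elements of A_Γ), and suppose there is g ∈ A_Γ with g⁻¹xg = y. Then x = y. Consequently, if g⁻¹Xg = Y for subsets X, Y of the vertex set of Γ, then X = Y. -/
private lemma prod_alt {M : Type*} [CommMonoid M] {V : Type} (f : V → M) (u v : V) :
    ∀ k, ((List.range (2*k)).map (fun i => f (if i % 2 = 0 then u else v))).prod
      = (f u * f v)^k
  | 0 => by simp
  | (k+1) => by
    have h2 : 2*(k+1) = (2*k+1)+1 := by ring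
    rw [h2, List.range_succ, List.range_succ, List.map_append, List.map_append,
      List.prod_append, List.prod_append, prod_alt f u v k]
    have e1 : (2*k) % 2 = 0 := by omega
    have e2 : (2*k+1) % 2 = 1 := by omega
    simp only [List.map_cons, List.map_nil, List.prod_cons, List.prod_nil, e1, e2]
    simp [pow_succ, mul_assoc]

private lemma lift_artinWord {M : Type*} [CommGroup M] {V : Type} (f : V → M) (u v : V)
    (k : ℕ) : FreeGroup.lift f (LabeledGraph.artinWord u v (2*k)) = (f u * f v)^k := by
  rw [LabeledGraph.artinWord, map_list_prod, List.map_map]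
  have : ((FreeGroup.lift f) ∘ fun i => FreeGroup.of (if i % 2 = 0 then u else v))
      = fun i => f (if i % 2 = 0 then u else v) := by
    funext i; by_cases h : i % 2 = 0 <;> simp [h]
  rw [this, prod_alt]

/-- In an even Artin group, two standard generators are conjugate only
if they are equal; consequently, if `g⁻¹Xg = Y` for sets `X, Y` of standard generators,
then `X = Y`. -/
theorem even_artin_conjugate_generators_eq
    {V : Type} [Finite V] (Γ : LabeledGraph V) (heven : Γ.IsEven) :
    (∀ (x y : V) (g : Γ.ArtinGroup), g⁻¹ * Γ.gen x * g = Γ.gen y → x = y) ∧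
    (∀ (X Y : Set V) (g : Γ.ArtinGroup),
      (fun a => g⁻¹ * a * g) '' (Γ.gen '' X) = Γ.gen '' Y → X = Y) := by
  classical
  set M := Multiplicative (V →₀ ℤ)
  set f : V → M := fun v => Multiplicative.ofAdd (Finsupp.single v 1) with hf
  have hrels : ∀ r ∈ Γ.artinRels, FreeGroup.lift f r = 1 := by
    rintro r ⟨u, v, hadj, rfl⟩
    obtain ⟨k, hk⟩ := heven hadj
    have hk2 : Γ.label u v = 2 * k := by omega
    rw [map_mul, map_inv, hk2, lift_artinWord, lift_artinWord,
      mul_comm (f v) (f u), mul_inv_cancel]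
  set φ : Γ.ArtinGroup →* M := PresentedGroup.toGroup hrels with hφ
  have hgen : ∀ v : V, φ (Γ.gen v) = f v := fun v => PresentedGroup.toGroup.of hrels
  have key : ∀ (x y : V) (g : Γ.ArtinGroup), g⁻¹ * Γ.gen x * g = Γ.gen y → x = y := by
    intro x y g h
    have := congrArg φ h
    rw [map_mul, map_mul, map_inv, hgen, hgen] at this
    have hxy : f x = f y := by
      rw [← this]
      rw [mul_comm ((φ g)⁻¹) (f x), mul_assoc, inv_mul_cancel, mul_one]
    have : Finsupp.single x (1 : ℤ) = Finsupp.single y 1 := by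
      simpa [hf, Multiplicative.ofAdd] using hxy
    exact Finsupp.single_left_injective one_ne_zero this
  refine ⟨key, ?_⟩
  intro X Y g h
  ext a
  constructor
  · intro ha
    have : g⁻¹ * Γ.gen a * g ∈ Γ.gen '' Y := by
      rw [← h]; exact ⟨Γ.gen a, ⟨a, ha, rfl⟩, rfl⟩
    obtain ⟨b, hb, hab⟩ := this
    rwa [key a b g hab.symm]
  · intro ha
    have : Γ.gen a ∈ (fun a => g⁻¹ * a * g) '' (Γ.gen '' X) := by
      rw [h]; exact ⟨a, ha, rfl⟩
    obtain ⟨_, ⟨b, hb, rfl⟩, hab⟩ := this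
    rwa [← key b a g hab]
end
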